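/- If X^{αβ} is a real nonzero skew 2-tensor (in the sense that X^{αγ}·conj(X)_{βγ} = (ξ/4)δ^α_β) with ξ ≠ 0, then the skew 4-tensor x^{αβγδ} := 12·ξ^{−1}·X^{[αβ}X^{γδ]} satisfies X^{αβ} = (1/2)·x^{αβγδ}·conj(X)_{γδ}. -/
import Mathlib


open Finset

/-- The signs of the (2,2)-signature conjugation on the orthonormal basis. -/
noncomputable def sgn4 : Fin 4 → ℂ := ![1, 1, -1, -1]

/-- The conjugate skew tensor with lowered indices:
`conj(X)_{αβ} = ε_α ε_β · conj(X^{αβ})`. -/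
noncomputable def Xlow (X : Fin 4 → Fin 4 → ℂ) (a b : Fin 4) : ℂ :=
  sgn4 a * sgn4 b * star (X a b)

/-- The real invariant `ξ = X^{αβ}·conj(X)_{αβ}`. -/
noncomputable def xiInv (X : Fin 4 → Fin 4 → ℂ) : ℂ :=
  ∑ a, ∑ b, X a b * Xlow X a b

/-- The full antisymmetrization `X^{[αβ}X^{γδ]}`. -/
noncomputable def XXasym (X : Fin 4 → Fin 4 → ℂ) (a b c d : Fin 4) : ℂ :=
  (1 / 24 : ℂ) * ∑ σ : Equiv.Perm (Fin 4),
    ((Equiv.Perm.sign σ : ℤ) : ℂ) *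
      X (![a, b, c, d] (σ 0)) (![a, b, c, d] (σ 1)) *
      X (![a, b, c, d] (σ 2)) (![a, b, c, d] (σ 3))

/-- The skew 4-tensor `x^{αβγδ} = 12·ξ⁻¹·X^{[αβ}X^{γδ]}`. -/
noncomputable def x4 (X : Fin 4 → Fin 4 → ℂ) (a b c d : Fin 4) : ℂ :=
  (12 / xiInv X) * XXasym X a b c d

theorem XXasym_eq' (X : Fin 4 → Fin 4 → ℂ) (hskew : ∀ a b, X b a = -X a b) (a b c d : Fin 4) :
    XXasym X a b c d = (1/3) * (X a b * X c d - X a c * X b d + X a d * X b c) := by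
  have huniv : (Finset.univ : Finset (Equiv.Perm (Fin 4))) =
    {(1 : Equiv.Perm (Fin 4)),
 Equiv.swap (2:Fin 4) 3,
 Equiv.swap (1:Fin 4) 2,
 Equiv.swap (1:Fin 4) 2 * Equiv.swap (2:Fin 4) 3,
 Equiv.swap (1:Fin 4) 3 * Equiv.swap (2:Fin 4) 3,
 Equiv.swap (1:Fin 4) 3,
 Equiv.swap (0:Fin 4) 1,
 Equiv.swap (0:Fin 4) 1 * Equiv.swap (2:Fin 4) 3,
 Equiv.swap (0:Fin 4) 1 * Equiv.swap (1:Fin 4) 2,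
 Equiv.swap (0:Fin 4) 1 * Equiv.swap (1:Fin 4) 2 * Equiv.swap (2:Fin 4) 3,
 Equiv.swap (0:Fin 4) 1 * Equiv.swap (1:Fin 4) 3 * Equiv.swap (2:Fin 4) 3,
 Equiv.swap (0:Fin 4) 1 * Equiv.swap (1:Fin 4) 3,
 Equiv.swap (0:Fin 4) 2 * Equiv.swap (1:Fin 4) 2,
 Equiv.swap (0:Fin 4) 2 * Equiv.swap (1:Fin 4) 2 * Equiv.swap (2:Fin 4) 3,
 Equiv.swap (0:Fin 4) 2,
 Equiv.swap (0:Fin 4) 2 * Equiv.swap (2:Fin 4) 3,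
 Equiv.swap (0:Fin 4) 2 * Equiv.swap (1:Fin 4) 3,
 Equiv.swap (0:Fin 4) 2 * Equiv.swap (1:Fin 4) 3 * Equiv.swap (2:Fin 4) 3,
 Equiv.swap (0:Fin 4) 3 * Equiv.swap (1:Fin 4) 3 * Equiv.swap (2:Fin 4) 3,
 Equiv.swap (0:Fin 4) 3 * Equiv.swap (1:Fin 4) 3,
 Equiv.swap (0:Fin 4) 3 * Equiv.swap (2:Fin 4) 3,
 Equiv.swap (0:Fin 4) 3,
 Equiv.swap (0:Fin 4) 3 * Equiv.swap (1:Fin 4) 2 * Equiv.swap (2:Fin 4) 3,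
 Equiv.swap (0:Fin 4) 3 * Equiv.swap (1:Fin 4) 2} := by decide
  rw [XXasym, huniv]
  rw [Finset.sum_insert (by decide)]
  rw [Finset.sum_insert (by decide)]
  rw [Finset.sum_insert (by decide)]
  rw [Finset.sum_insert (by decide)]
  rw [Finset.sum_insert (by decide)]
  rw [Finset.sum_insert (by decide)]
  rw [Finset.sum_insert (by decide)]
  rw [Finset.sum_insert (by decide)]
  rw [Finset.sum_insert (by decide)]
  rw [Finset.sum_insert (by decide)]
  rw [Finset.sum_insert (by decide)]
  rw [Finset.sum_insert (by decide)]
  rw [Finset.sum_insert (by decide)]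
  rw [Finset.sum_insert (by decide)]
  rw [Finset.sum_insert (by decide)]
  rw [Finset.sum_insert (by decide)]
  rw [Finset.sum_insert (by decide)]
  rw [Finset.sum_insert (by decide)]
  rw [Finset.sum_insert (by decide)]
  rw [Finset.sum_insert (by decide)]
  rw [Finset.sum_insert (by decide)]
  rw [Finset.sum_insert (by decide)]
  rw [Finset.sum_insert (by decide)]
  rw [Finset.sum_singleton]
  have hs0 : ((Equiv.Perm.sign ((1 : Equiv.Perm (Fin 4))) : ℤ) : ℂ) = 1 := by rw [show (Equiv.Perm.sign ((1 : Equiv.Perm (Fin 4)))) = (1 : ℤˣ) from by decide]; norm_num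
  have ha0_0 : ((1 : Equiv.Perm (Fin 4))) (0 : Fin 4) = 0 := by decide
  have ha0_1 : ((1 : Equiv.Perm (Fin 4))) (1 : Fin 4) = 1 := by decide
  have ha0_2 : ((1 : Equiv.Perm (Fin 4))) (2 : Fin 4) = 2 := by decide
  have ha0_3 : ((1 : Equiv.Perm (Fin 4))) (3 : Fin 4) = 3 := by decide
  have hs1 : ((Equiv.Perm.sign (Equiv.swap (2:Fin 4) 3) : ℤ) : ℂ) = -1 := by rw [show (Equiv.Perm.sign (Equiv.swap (2:Fin 4) 3)) = (-1 : ℤˣ) from by decide]; norm_num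
  have ha1_0 : (Equiv.swap (2:Fin 4) 3) (0 : Fin 4) = 0 := by decide
  have ha1_1 : (Equiv.swap (2:Fin 4) 3) (1 : Fin 4) = 1 := by decide
  have ha1_2 : (Equiv.swap (2:Fin 4) 3) (2 : Fin 4) = 3 := by decide
  have ha1_3 : (Equiv.swap (2:Fin 4) 3) (3 : Fin 4) = 2 := by decide
  have hs2 : ((Equiv.Perm.sign (Equiv.swap (1:Fin 4) 2) : ℤ) : ℂ) = -1 := by rw [show (Equiv.Perm.sign (Equiv.swap (1:Fin 4) 2)) = (-1 : ℤˣ) from by decide]; norm_num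
  have ha2_0 : (Equiv.swap (1:Fin 4) 2) (0 : Fin 4) = 0 := by decide
  have ha2_1 : (Equiv.swap (1:Fin 4) 2) (1 : Fin 4) = 2 := by decide
  have ha2_2 : (Equiv.swap (1:Fin 4) 2) (2 : Fin 4) = 1 := by decide
  have ha2_3 : (Equiv.swap (1:Fin 4) 2) (3 : Fin 4) = 3 := by decide
  have hs3 : ((Equiv.Perm.sign (Equiv.swap (1:Fin 4) 2 * Equiv.swap (2:Fin 4) 3) : ℤ) : ℂ) = 1 := by rw [show (Equiv.Perm.sign (Equiv.swap (1:Fin 4) 2 * Equiv.swap (2:Fin 4) 3)) = (1 : ℤˣ) from by decide]; norm_num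
  have ha3_0 : (Equiv.swap (1:Fin 4) 2 * Equiv.swap (2:Fin 4) 3) (0 : Fin 4) = 0 := by decide
  have ha3_1 : (Equiv.swap (1:Fin 4) 2 * Equiv.swap (2:Fin 4) 3) (1 : Fin 4) = 2 := by decide
  have ha3_2 : (Equiv.swap (1:Fin 4) 2 * Equiv.swap (2:Fin 4) 3) (2 : Fin 4) = 3 := by decide
  have ha3_3 : (Equiv.swap (1:Fin 4) 2 * Equiv.swap (2:Fin 4) 3) (3 : Fin 4) = 1 := by decide
  have hs4 : ((Equiv.Perm.sign (Equiv.swap (1:Fin 4) 3 * Equiv.swap (2:Fin 4) 3) : ℤ) : ℂ) = 1 := by rw [show (Equiv.Perm.sign (Equiv.swap (1:Fin 4) 3 * Equiv.swap (2:Fin 4) 3)) = (1 : ℤˣ) from by decide]; norm_num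
  have ha4_0 : (Equiv.swap (1:Fin 4) 3 * Equiv.swap (2:Fin 4) 3) (0 : Fin 4) = 0 := by decide
  have ha4_1 : (Equiv.swap (1:Fin 4) 3 * Equiv.swap (2:Fin 4) 3) (1 : Fin 4) = 3 := by decide
  have ha4_2 : (Equiv.swap (1:Fin 4) 3 * Equiv.swap (2:Fin 4) 3) (2 : Fin 4) = 1 := by decide
  have ha4_3 : (Equiv.swap (1:Fin 4) 3 * Equiv.swap (2:Fin 4) 3) (3 : Fin 4) = 2 := by decide
  have hs5 : ((Equiv.Perm.sign (Equiv.swap (1:Fin 4) 3) : ℤ) : ℂ) = -1 := by rw [show (Equiv.Perm.sign (Equiv.swap (1:Fin 4) 3)) = (-1 : ℤˣ) from by decide]; norm_num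
  have ha5_0 : (Equiv.swap (1:Fin 4) 3) (0 : Fin 4) = 0 := by decide
  have ha5_1 : (Equiv.swap (1:Fin 4) 3) (1 : Fin 4) = 3 := by decide
  have ha5_2 : (Equiv.swap (1:Fin 4) 3) (2 : Fin 4) = 2 := by decide
  have ha5_3 : (Equiv.swap (1:Fin 4) 3) (3 : Fin 4) = 1 := by decide
  have hs6 : ((Equiv.Perm.sign (Equiv.swap (0:Fin 4) 1) : ℤ) : ℂ) = -1 := by rw [show (Equiv.Perm.sign (Equiv.swap (0:Fin 4) 1)) = (-1 : ℤˣ) from by decide]; norm_num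
  have ha6_0 : (Equiv.swap (0:Fin 4) 1) (0 : Fin 4) = 1 := by decide
  have ha6_1 : (Equiv.swap (0:Fin 4) 1) (1 : Fin 4) = 0 := by decide
  have ha6_2 : (Equiv.swap (0:Fin 4) 1) (2 : Fin 4) = 2 := by decide
  have ha6_3 : (Equiv.swap (0:Fin 4) 1) (3 : Fin 4) = 3 := by decide
  have hs7 : ((Equiv.Perm.sign (Equiv.swap (0:Fin 4) 1 * Equiv.swap (2:Fin 4) 3) : ℤ) : ℂ) = 1 := by rw [show (Equiv.Perm.sign (Equiv.swap (0:Fin 4) 1 * Equiv.swap (2:Fin 4) 3)) = (1 : ℤˣ) from by decide]; norm_num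
  have ha7_0 : (Equiv.swap (0:Fin 4) 1 * Equiv.swap (2:Fin 4) 3) (0 : Fin 4) = 1 := by decide
  have ha7_1 : (Equiv.swap (0:Fin 4) 1 * Equiv.swap (2:Fin 4) 3) (1 : Fin 4) = 0 := by decide
  have ha7_2 : (Equiv.swap (0:Fin 4) 1 * Equiv.swap (2:Fin 4) 3) (2 : Fin 4) = 3 := by decide
  have ha7_3 : (Equiv.swap (0:Fin 4) 1 * Equiv.swap (2:Fin 4) 3) (3 : Fin 4) = 2 := by decide
  have hs8 : ((Equiv.Perm.sign (Equiv.swap (0:Fin 4) 1 * Equiv.swap (1:Fin 4) 2) : ℤ) : ℂ) = 1 := by rw [show (Equiv.Perm.sign (Equiv.swap (0:Fin 4) 1 * Equiv.swap (1:Fin 4) 2)) = (1 : ℤˣ) from by decide]; norm_num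
  have ha8_0 : (Equiv.swap (0:Fin 4) 1 * Equiv.swap (1:Fin 4) 2) (0 : Fin 4) = 1 := by decide
  have ha8_1 : (Equiv.swap (0:Fin 4) 1 * Equiv.swap (1:Fin 4) 2) (1 : Fin 4) = 2 := by decide
  have ha8_2 : (Equiv.swap (0:Fin 4) 1 * Equiv.swap (1:Fin 4) 2) (2 : Fin 4) = 0 := by decide
  have ha8_3 : (Equiv.swap (0:Fin 4) 1 * Equiv.swap (1:Fin 4) 2) (3 : Fin 4) = 3 := by decide
  have hs9 : ((Equiv.Perm.sign (Equiv.swap (0:Fin 4) 1 * Equiv.swap (1:Fin 4) 2 * Equiv.swap (2:Fin 4) 3) : ℤ) : ℂ) = -1 := by rw [show (Equiv.Perm.sign (Equiv.swap (0:Fin 4) 1 * Equiv.swap (1:Fin 4) 2 * Equiv.swap (2:Fin 4) 3)) = (-1 : ℤˣ) from by decide]; norm_num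
  have ha9_0 : (Equiv.swap (0:Fin 4) 1 * Equiv.swap (1:Fin 4) 2 * Equiv.swap (2:Fin 4) 3) (0 : Fin 4) = 1 := by decide
  have ha9_1 : (Equiv.swap (0:Fin 4) 1 * Equiv.swap (1:Fin 4) 2 * Equiv.swap (2:Fin 4) 3) (1 : Fin 4) = 2 := by decide
  have ha9_2 : (Equiv.swap (0:Fin 4) 1 * Equiv.swap (1:Fin 4) 2 * Equiv.swap (2:Fin 4) 3) (2 : Fin 4) = 3 := by decide
  have ha9_3 : (Equiv.swap (0:Fin 4) 1 * Equiv.swap (1:Fin 4) 2 * Equiv.swap (2:Fin 4) 3) (3 : Fin 4) = 0 := by decide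
  have hs10 : ((Equiv.Perm.sign (Equiv.swap (0:Fin 4) 1 * Equiv.swap (1:Fin 4) 3 * Equiv.swap (2:Fin 4) 3) : ℤ) : ℂ) = -1 := by rw [show (Equiv.Perm.sign (Equiv.swap (0:Fin 4) 1 * Equiv.swap (1:Fin 4) 3 * Equiv.swap (2:Fin 4) 3)) = (-1 : ℤˣ) from by decide]; norm_num
  have ha10_0 : (Equiv.swap (0:Fin 4) 1 * Equiv.swap (1:Fin 4) 3 * Equiv.swap (2:Fin 4) 3) (0 : Fin 4) = 1 := by decide
  have ha10_1 : (Equiv.swap (0:Fin 4) 1 * Equiv.swap (1:Fin 4) 3 * Equiv.swap (2:Fin 4) 3) (1 : Fin 4) = 3 := by decide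
  have ha10_2 : (Equiv.swap (0:Fin 4) 1 * Equiv.swap (1:Fin 4) 3 * Equiv.swap (2:Fin 4) 3) (2 : Fin 4) = 0 := by decide
  have ha10_3 : (Equiv.swap (0:Fin 4) 1 * Equiv.swap (1:Fin 4) 3 * Equiv.swap (2:Fin 4) 3) (3 : Fin 4) = 2 := by decide
  have hs11 : ((Equiv.Perm.sign (Equiv.swap (0:Fin 4) 1 * Equiv.swap (1:Fin 4) 3) : ℤ) : ℂ) = 1 := by rw [show (Equiv.Perm.sign (Equiv.swap (0:Fin 4) 1 * Equiv.swap (1:Fin 4) 3)) = (1 : ℤˣ) from by decide]; norm_num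
  have ha11_0 : (Equiv.swap (0:Fin 4) 1 * Equiv.swap (1:Fin 4) 3) (0 : Fin 4) = 1 := by decide
  have ha11_1 : (Equiv.swap (0:Fin 4) 1 * Equiv.swap (1:Fin 4) 3) (1 : Fin 4) = 3 := by decide
  have ha11_2 : (Equiv.swap (0:Fin 4) 1 * Equiv.swap (1:Fin 4) 3) (2 : Fin 4) = 2 := by decide
  have ha11_3 : (Equiv.swap (0:Fin 4) 1 * Equiv.swap (1:Fin 4) 3) (3 : Fin 4) = 0 := by decide
  have hs12 : ((Equiv.Perm.sign (Equiv.swap (0:Fin 4) 2 * Equiv.swap (1:Fin 4) 2) : ℤ) : ℂ) = 1 := by rw [show (Equiv.Perm.sign (Equiv.swap (0:Fin 4) 2 * Equiv.swap (1:Fin 4) 2)) = (1 : ℤˣ) from by decide]; norm_num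
  have ha12_0 : (Equiv.swap (0:Fin 4) 2 * Equiv.swap (1:Fin 4) 2) (0 : Fin 4) = 2 := by decide
  have ha12_1 : (Equiv.swap (0:Fin 4) 2 * Equiv.swap (1:Fin 4) 2) (1 : Fin 4) = 0 := by decide
  have ha12_2 : (Equiv.swap (0:Fin 4) 2 * Equiv.swap (1:Fin 4) 2) (2 : Fin 4) = 1 := by decide
  have ha12_3 : (Equiv.swap (0:Fin 4) 2 * Equiv.swap (1:Fin 4) 2) (3 : Fin 4) = 3 := by decide
  have hs13 : ((Equiv.Perm.sign (Equiv.swap (0:Fin 4) 2 * Equiv.swap (1:Fin 4) 2 * Equiv.swap (2:Fin 4) 3) : ℤ) : ℂ) = -1 := by rw [show (Equiv.Perm.sign (Equiv.swap (0:Fin 4) 2 * Equiv.swap (1:Fin 4) 2 * Equiv.swap (2:Fin 4) 3)) = (-1 : ℤˣ) from by decide]; norm_num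
  have ha13_0 : (Equiv.swap (0:Fin 4) 2 * Equiv.swap (1:Fin 4) 2 * Equiv.swap (2:Fin 4) 3) (0 : Fin 4) = 2 := by decide
  have ha13_1 : (Equiv.swap (0:Fin 4) 2 * Equiv.swap (1:Fin 4) 2 * Equiv.swap (2:Fin 4) 3) (1 : Fin 4) = 0 := by decide
  have ha13_2 : (Equiv.swap (0:Fin 4) 2 * Equiv.swap (1:Fin 4) 2 * Equiv.swap (2:Fin 4) 3) (2 : Fin 4) = 3 := by decide
  have ha13_3 : (Equiv.swap (0:Fin 4) 2 * Equiv.swap (1:Fin 4) 2 * Equiv.swap (2:Fin 4) 3) (3 : Fin 4) = 1 := by decide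
  have hs14 : ((Equiv.Perm.sign (Equiv.swap (0:Fin 4) 2) : ℤ) : ℂ) = -1 := by rw [show (Equiv.Perm.sign (Equiv.swap (0:Fin 4) 2)) = (-1 : ℤˣ) from by decide]; norm_num
  have ha14_0 : (Equiv.swap (0:Fin 4) 2) (0 : Fin 4) = 2 := by decide
  have ha14_1 : (Equiv.swap (0:Fin 4) 2) (1 : Fin 4) = 1 := by decide
  have ha14_2 : (Equiv.swap (0:Fin 4) 2) (2 : Fin 4) = 0 := by decide
  have ha14_3 : (Equiv.swap (0:Fin 4) 2) (3 : Fin 4) = 3 := by decide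
  have hs15 : ((Equiv.Perm.sign (Equiv.swap (0:Fin 4) 2 * Equiv.swap (2:Fin 4) 3) : ℤ) : ℂ) = 1 := by rw [show (Equiv.Perm.sign (Equiv.swap (0:Fin 4) 2 * Equiv.swap (2:Fin 4) 3)) = (1 : ℤˣ) from by decide]; norm_num
  have ha15_0 : (Equiv.swap (0:Fin 4) 2 * Equiv.swap (2:Fin 4) 3) (0 : Fin 4) = 2 := by decide
  have ha15_1 : (Equiv.swap (0:Fin 4) 2 * Equiv.swap (2:Fin 4) 3) (1 : Fin 4) = 1 := by decide
  have ha15_2 : (Equiv.swap (0:Fin 4) 2 * Equiv.swap (2:Fin 4) 3) (2 : Fin 4) = 3 := by decide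
  have ha15_3 : (Equiv.swap (0:Fin 4) 2 * Equiv.swap (2:Fin 4) 3) (3 : Fin 4) = 0 := by decide
  have hs16 : ((Equiv.Perm.sign (Equiv.swap (0:Fin 4) 2 * Equiv.swap (1:Fin 4) 3) : ℤ) : ℂ) = 1 := by rw [show (Equiv.Perm.sign (Equiv.swap (0:Fin 4) 2 * Equiv.swap (1:Fin 4) 3)) = (1 : ℤˣ) from by decide]; norm_num
  have ha16_0 : (Equiv.swap (0:Fin 4) 2 * Equiv.swap (1:Fin 4) 3) (0 : Fin 4) = 2 := by decide
  have ha16_1 : (Equiv.swap (0:Fin 4) 2 * Equiv.swap (1:Fin 4) 3) (1 : Fin 4) = 3 := by decide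
  have ha16_2 : (Equiv.swap (0:Fin 4) 2 * Equiv.swap (1:Fin 4) 3) (2 : Fin 4) = 0 := by decide
  have ha16_3 : (Equiv.swap (0:Fin 4) 2 * Equiv.swap (1:Fin 4) 3) (3 : Fin 4) = 1 := by decide
  have hs17 : ((Equiv.Perm.sign (Equiv.swap (0:Fin 4) 2 * Equiv.swap (1:Fin 4) 3 * Equiv.swap (2:Fin 4) 3) : ℤ) : ℂ) = -1 := by rw [show (Equiv.Perm.sign (Equiv.swap (0:Fin 4) 2 * Equiv.swap (1:Fin 4) 3 * Equiv.swap (2:Fin 4) 3)) = (-1 : ℤˣ) from by decide]; norm_num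
  have ha17_0 : (Equiv.swap (0:Fin 4) 2 * Equiv.swap (1:Fin 4) 3 * Equiv.swap (2:Fin 4) 3) (0 : Fin 4) = 2 := by decide
  have ha17_1 : (Equiv.swap (0:Fin 4) 2 * Equiv.swap (1:Fin 4) 3 * Equiv.swap (2:Fin 4) 3) (1 : Fin 4) = 3 := by decide
  have ha17_2 : (Equiv.swap (0:Fin 4) 2 * Equiv.swap (1:Fin 4) 3 * Equiv.swap (2:Fin 4) 3) (2 : Fin 4) = 1 := by decide
  have ha17_3 : (Equiv.swap (0:Fin 4) 2 * Equiv.swap (1:Fin 4) 3 * Equiv.swap (2:Fin 4) 3) (3 : Fin 4) = 0 := by decide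
  have hs18 : ((Equiv.Perm.sign (Equiv.swap (0:Fin 4) 3 * Equiv.swap (1:Fin 4) 3 * Equiv.swap (2:Fin 4) 3) : ℤ) : ℂ) = -1 := by rw [show (Equiv.Perm.sign (Equiv.swap (0:Fin 4) 3 * Equiv.swap (1:Fin 4) 3 * Equiv.swap (2:Fin 4) 3)) = (-1 : ℤˣ) from by decide]; norm_num
  have ha18_0 : (Equiv.swap (0:Fin 4) 3 * Equiv.swap (1:Fin 4) 3 * Equiv.swap (2:Fin 4) 3) (0 : Fin 4) = 3 := by decide
  have ha18_1 : (Equiv.swap (0:Fin 4) 3 * Equiv.swap (1:Fin 4) 3 * Equiv.swap (2:Fin 4) 3) (1 : Fin 4) = 0 := by decide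
  have ha18_2 : (Equiv.swap (0:Fin 4) 3 * Equiv.swap (1:Fin 4) 3 * Equiv.swap (2:Fin 4) 3) (2 : Fin 4) = 1 := by decide
  have ha18_3 : (Equiv.swap (0:Fin 4) 3 * Equiv.swap (1:Fin 4) 3 * Equiv.swap (2:Fin 4) 3) (3 : Fin 4) = 2 := by decide
  have hs19 : ((Equiv.Perm.sign (Equiv.swap (0:Fin 4) 3 * Equiv.swap (1:Fin 4) 3) : ℤ) : ℂ) = 1 := by rw [show (Equiv.Perm.sign (Equiv.swap (0:Fin 4) 3 * Equiv.swap (1:Fin 4) 3)) = (1 : ℤˣ) from by decide]; norm_num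
  have ha19_0 : (Equiv.swap (0:Fin 4) 3 * Equiv.swap (1:Fin 4) 3) (0 : Fin 4) = 3 := by decide
  have ha19_1 : (Equiv.swap (0:Fin 4) 3 * Equiv.swap (1:Fin 4) 3) (1 : Fin 4) = 0 := by decide
  have ha19_2 : (Equiv.swap (0:Fin 4) 3 * Equiv.swap (1:Fin 4) 3) (2 : Fin 4) = 2 := by decide
  have ha19_3 : (Equiv.swap (0:Fin 4) 3 * Equiv.swap (1:Fin 4) 3) (3 : Fin 4) = 1 := by decide
  have hs20 : ((Equiv.Perm.sign (Equiv.swap (0:Fin 4) 3 * Equiv.swap (2:Fin 4) 3) : ℤ) : ℂ) = 1 := by rw [show (Equiv.Perm.sign (Equiv.swap (0:Fin 4) 3 * Equiv.swap (2:Fin 4) 3)) = (1 : ℤˣ) from by decide]; norm_num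
  have ha20_0 : (Equiv.swap (0:Fin 4) 3 * Equiv.swap (2:Fin 4) 3) (0 : Fin 4) = 3 := by decide
  have ha20_1 : (Equiv.swap (0:Fin 4) 3 * Equiv.swap (2:Fin 4) 3) (1 : Fin 4) = 1 := by decide
  have ha20_2 : (Equiv.swap (0:Fin 4) 3 * Equiv.swap (2:Fin 4) 3) (2 : Fin 4) = 0 := by decide
  have ha20_3 : (Equiv.swap (0:Fin 4) 3 * Equiv.swap (2:Fin 4) 3) (3 : Fin 4) = 2 := by decide
  have hs21 : ((Equiv.Perm.sign (Equiv.swap (0:Fin 4) 3) : ℤ) : ℂ) = -1 := by rw [show (Equiv.Perm.sign (Equiv.swap (0:Fin 4) 3)) = (-1 : ℤˣ) from by decide]; norm_num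
  have ha21_0 : (Equiv.swap (0:Fin 4) 3) (0 : Fin 4) = 3 := by decide
  have ha21_1 : (Equiv.swap (0:Fin 4) 3) (1 : Fin 4) = 1 := by decide
  have ha21_2 : (Equiv.swap (0:Fin 4) 3) (2 : Fin 4) = 2 := by decide
  have ha21_3 : (Equiv.swap (0:Fin 4) 3) (3 : Fin 4) = 0 := by decide
  have hs22 : ((Equiv.Perm.sign (Equiv.swap (0:Fin 4) 3 * Equiv.swap (1:Fin 4) 2 * Equiv.swap (2:Fin 4) 3) : ℤ) : ℂ) = -1 := by rw [show (Equiv.Perm.sign (Equiv.swap (0:Fin 4) 3 * Equiv.swap (1:Fin 4) 2 * Equiv.swap (2:Fin 4) 3)) = (-1 : ℤˣ) from by decide]; norm_num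
  have ha22_0 : (Equiv.swap (0:Fin 4) 3 * Equiv.swap (1:Fin 4) 2 * Equiv.swap (2:Fin 4) 3) (0 : Fin 4) = 3 := by decide
  have ha22_1 : (Equiv.swap (0:Fin 4) 3 * Equiv.swap (1:Fin 4) 2 * Equiv.swap (2:Fin 4) 3) (1 : Fin 4) = 2 := by decide
  have ha22_2 : (Equiv.swap (0:Fin 4) 3 * Equiv.swap (1:Fin 4) 2 * Equiv.swap (2:Fin 4) 3) (2 : Fin 4) = 0 := by decide
  have ha22_3 : (Equiv.swap (0:Fin 4) 3 * Equiv.swap (1:Fin 4) 2 * Equiv.swap (2:Fin 4) 3) (3 : Fin 4) = 1 := by decide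
  have hs23 : ((Equiv.Perm.sign (Equiv.swap (0:Fin 4) 3 * Equiv.swap (1:Fin 4) 2) : ℤ) : ℂ) = 1 := by rw [show (Equiv.Perm.sign (Equiv.swap (0:Fin 4) 3 * Equiv.swap (1:Fin 4) 2)) = (1 : ℤˣ) from by decide]; norm_num
  have ha23_0 : (Equiv.swap (0:Fin 4) 3 * Equiv.swap (1:Fin 4) 2) (0 : Fin 4) = 3 := by decide
  have ha23_1 : (Equiv.swap (0:Fin 4) 3 * Equiv.swap (1:Fin 4) 2) (1 : Fin 4) = 2 := by decide
  have ha23_2 : (Equiv.swap (0:Fin 4) 3 * Equiv.swap (1:Fin 4) 2) (2 : Fin 4) = 1 := by decide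
  have ha23_3 : (Equiv.swap (0:Fin 4) 3 * Equiv.swap (1:Fin 4) 2) (3 : Fin 4) = 0 := by decide
  simp only [hs0, ha0_0, ha0_1, ha0_2, ha0_3, hs1, ha1_0, ha1_1, ha1_2, ha1_3, hs2, ha2_0, ha2_1, ha2_2, ha2_3, hs3, ha3_0, ha3_1, ha3_2, ha3_3, hs4, ha4_0, ha4_1, ha4_2, ha4_3, hs5, ha5_0, ha5_1, ha5_2, ha5_3, hs6, ha6_0, ha6_1, ha6_2, ha6_3, hs7, ha7_0, ha7_1, ha7_2, ha7_3, hs8, ha8_0, ha8_1, ha8_2, ha8_3, hs9, ha9_0, ha9_1, ha9_2, ha9_3, hs10, ha10_0, ha10_1, ha10_2, ha10_3, hs11, ha11_0, ha11_1, ha11_2, ha11_3, hs12, ha12_0, ha12_1, ha12_2, ha12_3, hs13, ha13_0, ha13_1, ha13_2, ha13_3, hs14, ha14_0, ha14_1, ha14_2, ha14_3, hs15, ha15_0, ha15_1, ha15_2, ha15_3, hs16, ha16_0, ha16_1, ha16_2, ha16_3, hs17, ha17_0, ha17_1, ha17_2, ha17_3, hs18, ha18_0, ha18_1, ha18_2,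 ha18_3, hs19, ha19_0, ha19_1, ha19_2, ha19_3, hs20, ha20_0, ha20_1, ha20_2, ha20_3, hs21, ha21_0, ha21_1, ha21_2, ha21_3, hs22, ha22_0, ha22_1, ha22_2, ha22_3, hs23, ha23_0, ha23_1, ha23_2, ha23_3, Matrix.cons_val_zero, Matrix.cons_val_one, Matrix.head_cons,
    Matrix.cons_val_two, Matrix.tail_cons, Matrix.cons_val_three]
  simp only [hskew a b, hskew a c, hskew a d, hskew b c, hskew b d, hskew c d]
  ring
/-- If `X^{αβ}` is a real nonzero skew tensor
(`X^{αγ}·conj(X)_{βγ} = (ξ/4)·δ^α_β`) with `ξ ≠ 0`, then the skew 4-tensor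
`x^{αβγδ} = 12·ξ⁻¹·X^{[αβ}X^{γδ]}` satisfies
`X^{αβ} = (1/2)·x^{αβγδ}·conj(X)_{γδ}`. -/
theorem stmt9 (X : Fin 4 → Fin 4 → ℂ) (hX : X ≠ 0)
    (hskew : ∀ a b, X b a = -X a b)
    (hreal : ∀ a b, (∑ c, X a c * Xlow X b c) =
      (xiInv X / 4) * (if a = b then 1 else 0))
    (hxi : xiInv X ≠ 0) :
    ∀ a b, X a b = (1 / 2 : ℂ) * ∑ c, ∑ d, x4 X a b c d * Xlow X c d := by
  intro a b
  have key : ∀ c d : Fin 4, x4 X a b c d * Xlow X c d =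
      (4 / xiInv X) * (X a b * (X c d * Xlow X c d)
        - X a c * (X b d * Xlow X c d) + X b c * (X a d * Xlow X c d)) := by
    intro c d
    rw [x4, XXasym_eq' X hskew]
    ring
  have hS1 : (∑ c, ∑ d, X a b * (X c d * Xlow X c d)) = X a b * xiInv X := by
    rw [xiInv, Finset.mul_sum]
    exact Finset.sum_congr rfl fun c _ => (Finset.mul_sum _ _ _).symm
  have hS2 : (∑ c, ∑ d, X a c * (X b d * Xlow X c d)) = (xiInv X / 4) * X a b := by
    calc (∑ c, ∑ d, X a c * (X b d * Xlow X c d))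
        = ∑ c, (if b = c then X a c * (xiInv X / 4) else 0) := by
          refine Finset.sum_congr rfl fun c _ => ?_
          rw [← Finset.mul_sum, hreal b c]
          by_cases h : b = c <;> simp [h] <;> ring
      _ = X a b * (xiInv X / 4) := by rw [Finset.sum_ite_eq]; simp
      _ = (xiInv X / 4) * X a b := by ring
  have hS3 : (∑ c, ∑ d, X b c * (X a d * Xlow X c d)) = -((xiInv X / 4) * X a b) := by
    calc (∑ c, ∑ d, X b c * (X a d * Xlow X c d))
        = ∑ c, (if a = c then X b c * (xiInv X / 4) else 0) := by
          refine Finset.sum_congr rfl fun c _ => ?_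
          rw [← Finset.mul_sum, hreal a c]
          by_cases h : a = c <;> simp [h] <;> ring
      _ = X b a * (xiInv X / 4) := by rw [Finset.sum_ite_eq]; simp
      _ = -((xiInv X / 4) * X a b) := by rw [hskew a b]; ring
  have hmain : (∑ c, ∑ d, x4 X a b c d * Xlow X c d)
      = (4 / xiInv X) * (X a b * xiInv X - (xiInv X / 4) * X a b
          + -((xiInv X / 4) * X a b)) := by
    calc (∑ c, ∑ d, x4 X a b c d * Xlow X c d)
        = ∑ c, ∑ d, (4 / xiInv X) * (X a b * (X c d * Xlow X c d)
            - X a c * (X b d * Xlow X c d) + X b c * (X a d * Xlow X c d)) :=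
          Finset.sum_congr rfl fun c _ => Finset.sum_congr rfl fun d _ => key c d
      _ = (4 / xiInv X) * ((∑ c, ∑ d, X a b * (X c d * Xlow X c d))
            - (∑ c, ∑ d, X a c * (X b d * Xlow X c d))
            + (∑ c, ∑ d, X b c * (X a d * Xlow X c d))) := by
          simp only [← Finset.mul_sum, Finset.sum_sub_distrib, Finset.sum_add_distrib]
      _ = _ := by rw [hS1, hS2, hS3]
  rw [hmain]
  field_simp
  ring
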